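/- arXiv:1501.00378 — 3 statements merged into one kernel-verified Lean document; each statement's English description precedes it below -/
import Mathlib

section
/- Let f be a binary string of length n, and let r, s, t be positive integers with g = gcd(r,s), n > r + s - g and t ≤ n + g - r - s. Consider the r/g equations f_{t+(i-1)g} = f_{t+(i-1)g+s} for i = 1,...,r/g, together with the s/g equations f_{t+(j-1)g} = f_{t+(j-1)g+r} for j = 1,...,s/g. If any (r+s)/g - 1 of these (r+s)/g equations hold, then the remaining one also holds. -/
/-- `bitEq f p q` says that the `p`-th and `q`-th bits (1-based) of the binary
string `f` are equal. -/
def bitEq {n : ℕ} (f : Fin n → Bool) (p q : ℕ) : Prop :=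
  ∀ (hp : p - 1 < n) (hq : q - 1 < n), f ⟨p - 1, hp⟩ = f ⟨q - 1, hq⟩

/-!
Put `N = r/g + s/g` and read the bits at the positions `t, t + g, …, t + (N-1)g` as a
sequence `u₀, …, u_{N-1}`. Then the `i`-equations say `u_k = u_{k + s/g}` for `k < r/g`, and the
`j`-equations say `u_k = u_{k - r/g}` for `k ≥ r/g`: together they are the edges `k → k + s/g`
of the translation by `s/g` on `ℤ/Nℤ`. The orbit of any point under this translation is a cycle,
and if all edges of a cycle but one are equalities, so is the last one.
-/

open Finset

/-- The bit `f_p`, 1-based as in `bitEq`, with junk value `false` beyond the end. -/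
def bitAt {n : ℕ} (f : Fin n → Bool) (p : ℕ) : Bool :=
  if h : p - 1 < n then f ⟨p - 1, h⟩ else false

lemma bitEq_iff_bitAt {n : ℕ} (f : Fin n → Bool) {p q : ℕ} (hp : p - 1 < n) (hq : q - 1 < n) :
    bitEq f p q ↔ bitAt f p = bitAt f q := by
  simp [bitEq, bitAt, hp, hq]

theorem apply_eq_apply_add_of_forall_ne {G α : Type*} [AddLeftCancelMonoid G] {a : G}
    (ha : IsOfFinAddOrder a) {F : G → α} {x₀ : G} (hF : ∀ x ≠ x₀, F x = F (x + a)) :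
    F x₀ = F (x₀ + a) := by
  have hchain : ∀ k < addOrderOf a, F (x₀ + a) = F (x₀ + (k + 1) • a) := by
    intro k
    induction k with
    | zero => simp
    | succ k ih =>
      intro hk
      have hne : x₀ + (k + 1) • a ≠ x₀ := fun h =>
        absurd (addOrderOf_le_of_nsmul_eq_zero k.succ_pos (add_eq_left.mp h)) (by omega)
      rw [ih (by omega), hF _ hne, add_assoc, ← succ_nsmul]
  have hpos := ha.addOrderOf_pos
  have := hchain (addOrderOf a - 1) (by omega)
  rwa [Nat.sub_add_cancel hpos, addOrderOf_nsmul_eq_zero, add_zero, eq_comm] at this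

theorem eq_add_of_forall_ne_of_eq_add {α : Type*} (u : ℕ → α) {m p k₀ : ℕ} (hk₀ : k₀ < m)
    (hA : ∀ k < m, k ≠ k₀ → u k = u (k + p)) (hB : ∀ k < p, u k = u (k + m)) :
    u k₀ = u (k₀ + p) := by
  have : NeZero (m + p) := ⟨by omega⟩
  have hval : ∀ x : ZMod (m + p), (x + p).val = (x.val + p) % (m + p) := fun x => by
    rw [ZMod.val_add, ZMod.val_natCast, Nat.add_mod_mod]
  have hF : ∀ x : ZMod (m + p), x ≠ k₀ → u x.val = u (x + p).val := by
    intro x hx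
    have hx_lt := x.val_lt
    rw [hval]
    by_cases hxm : x.val < m
    · rw [Nat.mod_eq_of_lt (by omega)]
      exact hA _ hxm fun h => hx (by rw [← h, ZMod.natCast_zmod_val])
    · rw [Nat.mod_eq_sub_mod (by omega), Nat.mod_eq_of_lt (by omega)]
      have := hB (x.val - m) (by omega)
      rw [Nat.sub_add_cancel (by omega)] at this
      rw [show x.val + p - (m + p) = x.val - m by omega, this]
  have := apply_eq_apply_add_of_forall_ne (isOfFinAddOrder_of_finite _) hF
  rwa [hval, ZMod.val_natCast_of_lt (by omega), Nat.mod_eq_of_lt (by omega)] at this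

theorem bitEq_add_of_forall_ne {n : ℕ} (f : Fin n → Bool) {r s t g : ℕ} (hgr : g ∣ r)
    (hgs : g ∣ s) (hn : r + s - g < n) (htn : t ≤ n + g - r - s) {i₀ : ℕ}
    (hi₀ : i₀ ∈ Icc 1 (r / g))
    (hA : ∀ i ∈ Icc 1 (r / g), i ≠ i₀ → bitEq f (t + (i - 1) * g) (t + (i - 1) * g + s))
    (hB : ∀ j ∈ Icc 1 (s / g), bitEq f (t + (j - 1) * g) (t + (j - 1) * g + r)) :
    bitEq f (t + (i₀ - 1) * g) (t + (i₀ - 1) * g + s) := by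
  have hg : 0 < g := Nat.pos_of_ne_zero (by rintro rfl; simp at hi₀)
  obtain ⟨m, rfl⟩ := hgr
  obtain ⟨p, rfl⟩ := hgs
  simp only [Nat.mul_div_cancel_left _ hg, mem_Icc] at hi₀ hA hB
  have hu : ∀ a b, a < m + p → b < m + p →
      (bitEq f (t + a * g) (t + b * g) ↔ bitAt f (t + a * g) = bitAt f (t + b * g)) := by
    intro a b ha hb
    have : a * g + g ≤ g * m + g * p := by nlinarith
    have : b * g + g ≤ g * m + g * p := by nlinarith
    exact bitEq_iff_bitAt f (by omega) (by omega)
  have hshift : ∀ k c, t + k * g + g * c = t + (k + c) * g := fun _ _ => by ring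
  have hA' : ∀ k < m, k ≠ i₀ - 1 →
      bitAt f (t + k * g) = bitAt f (t + (k + p) * g) := by
    intro k hk hne
    have h := hA (k + 1) (by omega) (by omega)
    rw [Nat.add_sub_cancel, hshift] at h
    exact (hu _ _ (by omega) (by omega)).mp h
  have hB' : ∀ k < p, bitAt f (t + k * g) = bitAt f (t + (k + m) * g) := by
    intro k hk
    have h := hB (k + 1) (by omega)
    rw [Nat.add_sub_cancel, hshift] at h
    exact (hu _ _ (by omega) (by omega)).mp h
  rw [hshift, hu _ _ (by omega) (by omega)]
  exact eq_add_of_forall_ne_of_eq_add (fun k => bitAt f (t + k * g)) (by omega) hA' hB'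

theorem stmt_2_general (n r s t : ℕ)
    (g : ℕ) (hg : g = Nat.gcd r s)
    (hn : r + s - g < n) (htn : t ≤ n + g - r - s) (f : Fin n → Bool) :
    (∀ i₀ ∈ Finset.Icc 1 (r / g),
      (∀ i ∈ Finset.Icc 1 (r / g), i ≠ i₀ →
        bitEq f (t + (i - 1) * g) (t + (i - 1) * g + s)) →
      (∀ j ∈ Finset.Icc 1 (s / g),
        bitEq f (t + (j - 1) * g) (t + (j - 1) * g + r)) →
      bitEq f (t + (i₀ - 1) * g) (t + (i₀ - 1) * g + s)) ∧
    (∀ j₀ ∈ Finset.Icc 1 (s / g),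
      (∀ i ∈ Finset.Icc 1 (r / g),
        bitEq f (t + (i - 1) * g) (t + (i - 1) * g + s)) →
      (∀ j ∈ Finset.Icc 1 (s / g), j ≠ j₀ →
        bitEq f (t + (j - 1) * g) (t + (j - 1) * g + r)) →
      bitEq f (t + (j₀ - 1) * g) (t + (j₀ - 1) * g + r)) := by
  have hgr : g ∣ r := hg ▸ Nat.gcd_dvd_left r s
  have hgs : g ∣ s := hg ▸ Nat.gcd_dvd_right r s
  -- the second family of equations is the first one with `r` and `s` exchanged
  exact ⟨fun i₀ hi₀ hA hB => bitEq_add_of_forall_ne f hgr hgs hn htn hi₀ hA hB,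
    fun j₀ hj₀ hA hB => bitEq_add_of_forall_ne f hgs hgr (by omega) (by omega) hj₀ hB hA⟩

/-- Lemma 2.4: if any `(r+s)/g - 1` of the `(r+s)/g` equations
`f_{t+(i-1)g} = f_{t+(i-1)g+s}` (`i = 1,…,r/g`) and
`f_{t+(j-1)g} = f_{t+(j-1)g+r}` (`j = 1,…,s/g`) hold, then the remaining one
also holds. -/
theorem stmt_2 (n r s t : ℕ) (hr : 0 < r) (hs : 0 < s) (ht : 0 < t)
    (g : ℕ) (hg : g = Nat.gcd r s)
    (hn : r + s - g < n) (htn : t ≤ n + g - r - s) (f : Fin n → Bool) :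
    (∀ i₀ ∈ Finset.Icc 1 (r / g),
      (∀ i ∈ Finset.Icc 1 (r / g), i ≠ i₀ →
        bitEq f (t + (i - 1) * g) (t + (i - 1) * g + s)) →
      (∀ j ∈ Finset.Icc 1 (s / g),
        bitEq f (t + (j - 1) * g) (t + (j - 1) * g + r)) →
      bitEq f (t + (i₀ - 1) * g) (t + (i₀ - 1) * g + s)) ∧
    (∀ j₀ ∈ Finset.Icc 1 (s / g),
      (∀ i ∈ Finset.Icc 1 (r / g),
        bitEq f (t + (i - 1) * g) (t + (i - 1) * g + s)) →
      (∀ j ∈ Finset.Icc 1 (s / g), j ≠ j₀ →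
        bitEq f (t + (j - 1) * g) (t + (j - 1) * g + r)) →
      bitEq f (t + (j₀ - 1) * g) (t + (j₀ - 1) * g + r)) :=
  stmt_2_general n r s t g hg hn htn f
end

section
/- Let f be a nonempty binary string and d ≥ 1. If Q_d(f) is not an isometric subgraph of Q_d, then there exist p-critical words for Q_d(f) for some p ≥ 2; that is, there exist vertices α, β of Q_d(f) with H(α,β) = p ≥ 2 such that no neighbor of α in the interval I_{Q_d}(α,β) belongs to Q_d(f), or no neighbor of β in I_{Q_d}(α,β) belongs to Q_d(f). -/
/-!
Take a pair `α, β` of vertices of `Q_d(f)` whose graph distance differs from their Hamming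
distance `p`, with `p` minimal. Then `p ≥ 2`, and no neighbour `α + e_i` of `α` in the interval
`I(α, β)` avoids `f`: otherwise, by minimality, it would be joined to `β` by a path of length
`p - 1` inside `Q_d(f)`, giving a path of length `p` from `α` to `β`.
-/

/-- Positions are 0-based. -/
def occursAt {d m : ℕ} (u : Fin d → Bool) (f : Fin m → Bool) (k : ℕ) : Prop :=
  ∃ _h : k + m ≤ d, ∀ i : Fin m, u ⟨k + i.1, by have := i.2; omega⟩ = f i

def hasFactor {d m : ℕ} (u : Fin d → Bool) (f : Fin m → Bool) : Prop :=
  ∃ k, occursAt u f k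

def Qcube (d : ℕ) : SimpleGraph (Fin d → Bool) where
  Adj α β := hammingDist α β = 1
  symm := ⟨by intro a b h; rwa [hammingDist_comm]⟩
  loopless := ⟨by intro a h; rw [hammingDist_self] at h; omega⟩

/-- The generalized Fibonacci cube `Q_d(f)`. -/
def Qgraph (d : ℕ) {m : ℕ} (f : Fin m → Bool) :
    SimpleGraph {u : Fin d → Bool // ¬ hasFactor u f} where
  Adj a b := hammingDist a.1 b.1 = 1
  symm := ⟨by intro a b h; rwa [hammingDist_comm]⟩
  loopless := ⟨by intro a h; rw [hammingDist_self] at h; omega⟩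

def IsIsometric (d : ℕ) {m : ℕ} (f : Fin m → Bool) : Prop :=
  ∀ a b : {u : Fin d → Bool // ¬ hasFactor u f},
    (Qgraph d f).dist a b = hammingDist a.1 b.1

def Good {m : ℕ} (f : Fin m → Bool) : Prop := ∀ d, 1 ≤ d → IsIsometric d f

def Bad {m : ℕ} (f : Fin m → Bool) : Prop := ∃ d, 1 ≤ d ∧ ¬ IsIsometric d f

/-- The index `B(f)`. -/
noncomputable def Bindex {m : ℕ} (f : Fin m → Bool) : ℕ :=
  sInf {d | ¬ IsIsometric d f}

/-- `flipBit α i` is the paper's `α + e_i`. -/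
def flipBit {d : ℕ} (α : Fin d → Bool) (i : Fin d) : Fin d → Bool :=
  Function.update α i (!(α i))

def pCritical (d : ℕ) {m : ℕ} (f : Fin m → Bool) (p : ℕ)
    (α β : Fin d → Bool) : Prop :=
  ¬ hasFactor α f ∧ ¬ hasFactor β f ∧ hammingDist α β = p ∧ 2 ≤ p ∧
    ((∀ i, α i ≠ β i → hasFactor (flipBit α i) f) ∨
     (∀ i, α i ≠ β i → hasFactor (flipBit β i) f))


theorem hammingDist_flipBit_add_one {d : ℕ} {α β : Fin d → Bool} {i : Fin d}
    (hi : α i ≠ β i) :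
    hammingDist (flipBit α i) β + 1 = hammingDist α β := by
  have hset : ({j | flipBit α i j ≠ β j} : Finset (Fin d)) =
      ({j | α j ≠ β j} : Finset (Fin d)).erase i := by
    ext j
    simp only [Finset.mem_filter, Finset.mem_erase, Finset.mem_univ, true_and]
    rcases eq_or_ne j i with rfl | hji
    · revert hi; simp only [flipBit, Function.update_self]; cases α j <;> cases β j <;> simp
    · simp [flipBit, hji]
  rw [hammingDist, hset, Finset.card_erase_add_one (by simpa using hi), hammingDist]

theorem hammingDist_flipBit_self {d : ℕ} (α : Fin d → Bool) (i : Fin d) :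
    hammingDist α (flipBit α i) = 1 := by
  have := hammingDist_flipBit_add_one (α := α) (β := flipBit α i) (i := i) (by simp [flipBit])
  simpa using this.symm

namespace Qgraph

variable {d m : ℕ} {f : Fin m → Bool} {a b c : {u : Fin d → Bool // ¬ hasFactor u f}}

theorem hammingDist_le_length (w : (Qgraph d f).Walk a b) : hammingDist a.1 b.1 ≤ w.length := by
  induction w with
  | nil => simp
  | @cons u v _ hadj w ih =>
    calc hammingDist u.1 _ ≤ hammingDist u.1 v.1 + hammingDist v.1 _ := hammingDist_triangle _ _ _
      _ = 1 + hammingDist v.1 _ := by rw [show hammingDist u.1 v.1 = 1 from hadj]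
      _ ≤ (w.cons hadj).length := by simp only [SimpleGraph.Walk.length_cons]; omega

theorem dist_eq_hammingDist_iff :
    (Qgraph d f).dist a b = hammingDist a.1 b.1 ↔
      ∃ w : (Qgraph d f).Walk a b, w.length = hammingDist a.1 b.1 := by
  constructor
  · intro h
    rcases eq_or_ne (hammingDist a.1 b.1) 0 with h0 | h0
    · obtain rfl : a = b := Subtype.ext (eq_of_hammingDist_eq_zero h0)
      exact ⟨.nil, h0.symm⟩
    · obtain ⟨w, hw⟩ := SimpleGraph.exists_walk_of_dist_ne_zero (h ▸ h0)
      exact ⟨w, hw.trans h⟩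
  · rintro ⟨w, hw⟩
    obtain ⟨w', hw'⟩ := SimpleGraph.Reachable.exists_walk_length_eq_dist ⟨w⟩
    exact le_antisymm (hw ▸ SimpleGraph.dist_le w) (hw' ▸ hammingDist_le_length w')

theorem dist_eq_hammingDist_of_adj (hac : (Qgraph d f).Adj a c)
    (hH : hammingDist c.1 b.1 + 1 = hammingDist a.1 b.1)
    (hcb : (Qgraph d f).dist c b = hammingDist c.1 b.1) :
    (Qgraph d f).dist a b = hammingDist a.1 b.1 := by
  obtain ⟨w, hw⟩ := dist_eq_hammingDist_iff.mp hcb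
  exact dist_eq_hammingDist_iff.mpr ⟨w.cons hac, by rw [SimpleGraph.Walk.length_cons, hw, hH]⟩

theorem two_le_hammingDist_of_dist_ne (h : (Qgraph d f).dist a b ≠ hammingDist a.1 b.1) :
    2 ≤ hammingDist a.1 b.1 := by
  by_contra! hlt
  interval_cases hH : hammingDist a.1 b.1
  · obtain rfl : a = b := Subtype.ext (eq_of_hammingDist_eq_zero hH)
    simp at h
  · exact h (SimpleGraph.dist_eq_one_iff_adj.mpr hH)

theorem exists_minimal_dist_ne_hammingDist (h : ¬ IsIsometric d f) :
    ∃ a b : {u : Fin d → Bool // ¬ hasFactor u f},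
      (Qgraph d f).dist a b ≠ hammingDist a.1 b.1 ∧
      ∀ a' b' : {u : Fin d → Bool // ¬ hasFactor u f},
        hammingDist a'.1 b'.1 < hammingDist a.1 b.1 →
          (Qgraph d f).dist a' b' = hammingDist a'.1 b'.1 := by
  obtain ⟨a, b, hab⟩ : ∃ a b, (Qgraph d f).dist a b ≠ hammingDist a.1 b.1 := by
    simpa [IsIsometric] using h
  obtain ⟨⟨a, b⟩, hab, hmin⟩ :=
    (measure fun x : _ × _ => hammingDist x.1.1 x.2.1).wf.has_min
      {x | (Qgraph d f).dist x.1 x.2 ≠ hammingDist x.1.1 x.2.1} ⟨(a, b), hab⟩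
  exact ⟨a, b, hab, fun a' b' hlt => by_contra fun hne => hmin (a', b') hne hlt⟩

theorem hasFactor_flipBit_of_minimal (hab : (Qgraph d f).dist a b ≠ hammingDist a.1 b.1)
    (hmin : ∀ a' b' : {u : Fin d → Bool // ¬ hasFactor u f},
      hammingDist a'.1 b'.1 < hammingDist a.1 b.1 →
        (Qgraph d f).dist a' b' = hammingDist a'.1 b'.1)
    {i : Fin d} (hi : a.1 i ≠ b.1 i) :
    hasFactor (flipBit a.1 i) f := by
  by_contra hc
  have hH := hammingDist_flipBit_add_one hi
  exact hab <| dist_eq_hammingDist_of_adj (c := ⟨flipBit a.1 i, hc⟩)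
    (hammingDist_flipBit_self a.1 i) hH (hmin _ b (by simp only; omega))

end Qgraph

theorem stmt_5_general (m d : ℕ) (f : Fin m → Bool)
    (h : ¬ IsIsometric d f) :
    ∃ p, ∃ α β : Fin d → Bool, pCritical d f p α β := by
  obtain ⟨a, b, hab, hmin⟩ := Qgraph.exists_minimal_dist_ne_hammingDist h
  exact ⟨_, a.1, b.1, a.2, b.2, rfl, Qgraph.two_le_hammingDist_of_dist_ne hab,
    Or.inl fun _ hi => Qgraph.hasFactor_flipBit_of_minimal hab hmin hi⟩

/-- Lemma 2.1 (necessity): if `Q_d(f)` is not isometric in `Q_d`, then there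
exist `p`-critical words for `Q_d(f)` for some `p ≥ 2`. -/
theorem stmt_5 (m d : ℕ) (hm : 0 < m) (hd : 1 ≤ d) (f : Fin m → Bool)
    (h : ¬ IsIsometric d f) :
    ∃ p, ∃ α β : Fin d → Bool, pCritical d f p α β :=
  stmt_5_general m d f h
end

section
/- If f is a bad binary string and α, β are 2-critical words for Q_{B(f)}(f), then B(f) = |f| + r for some integer r with 1 ≤ r ≤ |f| - 2; if instead α, β are 3-critical words for Q_{B(f)}(f), then B(f) = |f| + 3r' for some integer r' with 3r' + 1 ≤ |f|. -/
/-!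
Let `D` be the set of positions where `α` and `β` differ, and suppose every single flip of `α`
inside `D` creates `f`. Flipping `t ∈ D` creates `f` in a window of length `|f|` containing `t`:
there `α` reads `f` except at `t`. Let the windows of a nonempty `S ⊆ D` lie in a proper
subinterval of `[0, B(f))`. Restricted to it, `α` and `α` flipped on `S` differ only on `S`, and
each first step from `α` towards the other word creates `f`; as `Q_n(f)` is isometric for
`n < B(f)`, the restriction of `α` flipped on `S` must contain `f`. For `S = D` this is excluded
since `β` avoids `f`; hence the first window starts at `0`, the last one ends at `B(f)`, and
`B(f) = |f| + r` with `r` the start of the last window.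

For `|D| = 2` each defect lies in both windows, so `1 ≤ r ≤ |f| - 2`. For `|D| = 3`, with windows
at `0 < p < q`, the argument for `S` a pair of consecutive defects gives two more occurrences of
`f`. Reading the letters of `f` through these five overlapping windows, three shifts at a time,
pins the defects down and forces the consecutive window offsets (`0, u, p, q` with `u` the start of
the window for `{t₁, t₂}` when `t₂ < q`, and `0, p, v, q` with `v` that for `{t₂, t₃}` when
`|f| ≤ t₂`) to be equal, so `q = 3r' < |f|`; the remaining case `q ≤ t₂ < |f|` is contradictory.
-/

open Finset

/-- Words are read as functions on `ℕ`, padded with `false`, so that windows at arbitrary offsets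
need no `Fin` arithmetic. -/
def natWord {n : ℕ} (u : Fin n → Bool) : ℕ → Bool :=
  fun w => if h : w < n then u ⟨w, h⟩ else false

def Occurs (F : ℕ → Bool) (m : ℕ) (A : ℕ → Bool) (k : ℕ) : Prop :=
  ∀ z < m, A (k + z) = F z

def flipAt (A : ℕ → Bool) (S : Finset ℕ) : ℕ → Bool :=
  fun w => if w ∈ S then !A w else A w

lemma natWord_of_lt {n : ℕ} (u : Fin n → Bool) {w : ℕ} (hw : w < n) :
    natWord u w = u ⟨w, hw⟩ := dif_pos hw

lemma hasFactor_iff_exists_occurs {d m : ℕ} (u : Fin d → Bool) (f : Fin m → Bool) :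
    hasFactor u f ↔ ∃ k, k + m ≤ d ∧ Occurs (natWord f) m (natWord u) k := by
  refine ⟨fun ⟨k, hkm, hk⟩ => ⟨k, hkm, fun z hz => ?_⟩, fun ⟨k, hkm, hk⟩ => ⟨k, hkm, fun i => ?_⟩⟩
  · rw [natWord_of_lt _ (by omega), natWord_of_lt _ hz]
    exact hk ⟨z, hz⟩
  · have := hk i i.2
    rwa [natWord_of_lt _ (by omega), natWord_of_lt _ i.2] at this

lemma natWord_flipBit {d : ℕ} (α : Fin d → Bool) (i : Fin d) :
    natWord (flipBit α i) = flipAt (natWord α) {(i : ℕ)} := by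
  funext w
  by_cases hw : w < d
  · by_cases h : (⟨w, hw⟩ : Fin d) = i
    · subst h; simp [flipAt, natWord_of_lt _ hw, flipBit]
    · have : w ≠ i := fun hwi => h (Fin.ext hwi)
      simp [flipAt, natWord_of_lt _ hw, flipBit, Function.update_of_ne h, this]
  · have : w ≠ i := by omega
    simp [flipAt, natWord, hw, this]

def diffPos {d : ℕ} (α β : Fin d → Bool) : Finset ℕ :=
  (univ.filter fun i => α i ≠ β i).map Fin.valEmbedding

lemma card_diffPos {d : ℕ} (α β : Fin d → Bool) : (diffPos α β).card = hammingDist α β := by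
  simp [diffPos, hammingDist]

lemma natWord_eq_flipAt_diffPos {d : ℕ} (α β : Fin d → Bool) :
    natWord β = flipAt (natWord α) (diffPos α β) := by
  funext w
  by_cases hw : w < d
  · have : w ∈ diffPos α β ↔ α ⟨w, hw⟩ ≠ β ⟨w, hw⟩ := by simp [diffPos, Fin.exists_iff, hw]
    simp only [flipAt, natWord_of_lt _ hw, this]
    cases α ⟨w, hw⟩ <;> cases β ⟨w, hw⟩ <;> simp
  · have : w ∉ diffPos α β := fun hmem => hw (by obtain ⟨i, -, rfl⟩ := mem_map.1 hmem; exact i.2)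
    simp [flipAt, natWord, hw, this]

section Occurs

variable {F A : ℕ → Bool} {m : ℕ}

@[simp] lemma flipAt_empty (A : ℕ → Bool) : flipAt A ∅ = A := by
  funext w; simp [flipAt]

lemma Occurs.flipAt_congr {S T : Finset ℕ} {k : ℕ} (h : Occurs F m (flipAt A S) k)
    (hST : ∀ w, k ≤ w → w < k + m → (w ∈ S ↔ w ∈ T)) : Occurs F m (flipAt A T) k := by
  intro z hz
  rw [← h z hz]
  simp only [flipAt, hST (k + z) (by omega) (by omega)]

/-- Both windows read the same letter of `A` at `k₁ + z₁ = k₂ + z₂`, so the letters of `F` they see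
there agree iff that position is flipped in both or in neither. -/
lemma Occurs.eq_iff {S₁ S₂ : Finset ℕ} {k₁ k₂ : ℕ} (h₁ : Occurs F m (flipAt A S₁) k₁)
    (h₂ : Occurs F m (flipAt A S₂) k₂) (z₁ z₂ : ℕ) (hz₁ : z₁ < m := by omega)
    (hz₂ : z₂ < m := by omega) (hk : k₁ + z₁ = k₂ + z₂ := by omega) :
    F z₁ = F z₂ ↔ (k₁ + z₁ ∈ S₁ ↔ k₁ + z₁ ∈ S₂) := by
  rw [← h₁ z₁ hz₁, ← h₂ z₂ hz₂, ← hk]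
  unfold flipAt
  split_ifs <;> simp_all

lemma Occurs.mem_window {t k : ℕ} (h : Occurs F m (flipAt A {t}) k) (hA : ¬ Occurs F m A k) :
    k ≤ t ∧ t < k + m := by
  by_contra ht
  refine hA (flipAt_empty A ▸ h.flipAt_congr fun w _ _ => ?_)
  simp only [mem_singleton, notMem_empty, iff_false]
  omega

lemma Occurs.eq_of_flipAt_singleton {s t k : ℕ}
    (hs : Occurs F m (flipAt A {s}) k) (ht : Occurs F m (flipAt A {t}) k) (hks : k ≤ s)
    (hsk : s < k + m) : s = t := by
  have := (hs.eq_iff ht (s - k) (s - k)).1 rfl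
  simp only [mem_singleton] at this
  omega

end Occurs

lemma exists_eq_flipBit_of_hammingDist_eq_one {d : ℕ} {A C : Fin d → Bool}
    (h : hammingDist A C = 1) : ∃ i, C = flipBit A i := by
  obtain ⟨i, hi⟩ := card_eq_one.1 h
  have hdiff : ∀ j, A j ≠ C j ↔ j = i := fun j => by
    simpa using congrArg (j ∈ ·) hi
  refine ⟨i, funext fun j => ?_⟩
  by_cases hj : j = i
  · subst hj
    have := (hdiff j).2 rfl
    simp only [flipBit, Function.update_self]
    cases hA : A j <;> cases hC : C j <;> simp_all
  · simpa [flipBit, Function.update_of_ne hj] using (not_not.1 (mt (hdiff j).1 hj)).symm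

lemma hammingDist_flipBit_of_eq {d : ℕ} {A B : Fin d → Bool} {i : Fin d} (h : A i = B i) :
    hammingDist (flipBit A i) B = hammingDist A B + 1 := by
  have : (univ.filter fun j => flipBit A i j ≠ B j) =
      insert i (univ.filter fun j => A j ≠ B j) := by
    ext j
    by_cases hj : j = i
    · subst hj; simp [flipBit, h]
    · rw [mem_filter, mem_insert, mem_filter]
      simp [flipBit, hj]
  rw [hammingDist, hammingDist, this, card_insert_of_notMem (by simp [h])]

lemma hammingDist_le_walk_length {d m : ℕ} {f : Fin m → Bool}
    {a b : {u : Fin d → Bool // ¬ hasFactor u f}} (p : (Qgraph d f).Walk a b) :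
    hammingDist a.1 b.1 ≤ p.length := by
  induction p with
  | nil => simp
  | @cons u v w huv _ ih =>
    have : hammingDist u.1 v.1 = 1 := huv
    have := hammingDist_triangle u.1 v.1 w.1
    rw [SimpleGraph.Walk.length_cons]
    omega

lemma not_isIsometric_of_forall_hasFactor_flipBit {d m : ℕ} {f : Fin m → Bool}
    {A B : Fin d → Bool} (hA : ¬ hasFactor A f) (hB : ¬ hasFactor B f) (hAB : A ≠ B)
    (hflip : ∀ i, A i ≠ B i → hasFactor (flipBit A i) f) : ¬ IsIsometric d f := by
  intro hiso
  have hdist : (Qgraph d f).dist ⟨A, hA⟩ ⟨B, hB⟩ = hammingDist A B := hiso _ _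
  obtain ⟨p, hp⟩ := SimpleGraph.exists_walk_of_dist_ne_zero (hdist ▸ hammingDist_ne_zero.2 hAB)
  cases p with
  | nil => exact hAB rfl
  | @cons _ c _ hAc p =>
    -- the first step of a geodesic from `A` to `B` must flip a bit where they differ
    obtain ⟨i, hc⟩ := exists_eq_flipBit_of_hammingDist_eq_one hAc
    by_cases hi : A i = B i
    · have := hammingDist_le_walk_length p
      rw [hc, hammingDist_flipBit_of_eq hi] at this
      rw [SimpleGraph.Walk.length_cons, hdist] at hp
      omega
    · exact c.2 (hc ▸ hflip i hi)

lemma hasFactor_segment_iff {n m : ℕ} (f : Fin m → Bool) (A : ℕ → Bool) (l : ℕ) :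
    hasFactor (fun i : Fin n => A (l + i)) f ↔
      ∃ k, l ≤ k ∧ k + m ≤ l + n ∧ Occurs (natWord f) m A k := by
  have hword : ∀ w < n, natWord (fun i : Fin n => A (l + i)) w = A (l + w) :=
    fun w hw => natWord_of_lt _ hw
  rw [hasFactor_iff_exists_occurs]
  constructor
  · rintro ⟨k, hk, hocc⟩
    refine ⟨l + k, by omega, by omega, fun z hz => ?_⟩
    rw [← hocc z hz, hword _ (by omega), add_assoc]
  · rintro ⟨k, hlk, hk, hocc⟩
    refine ⟨k - l, by omega, fun z hz => ?_⟩
    rw [← hocc z hz, hword _ (by omega)]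
    congr 1
    omega

lemma exists_occurs_flipAt_of_isIsometric {n m : ℕ} {f : Fin m → Bool} (hiso : IsIsometric n f)
    {A : ℕ → Bool} {S : Finset ℕ} {l : ℕ} (hS : S.Nonempty)
    (hA : ∀ k, l ≤ k → k + m ≤ l + n → ¬ Occurs (natWord f) m A k)
    (hflip : ∀ t ∈ S, ∃ k, l ≤ k ∧ k + m ≤ l + n ∧ Occurs (natWord f) m (flipAt A {t}) k) :
    ∃ k, l ≤ k ∧ k + m ≤ l + n ∧ Occurs (natWord f) m (flipAt A S) k := by
  by_contra hno
  set A' : Fin n → Bool := fun i => A (l + i)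
  set B' : Fin n → Bool := fun i => flipAt A S (l + i)
  have hS_window : ∀ t ∈ S, l ≤ t ∧ t < l + n := fun t ht => by
    obtain ⟨k, hlk, hk, hocc⟩ := hflip t ht
    have := hocc.mem_window (hA k hlk hk)
    omega
  have hdiff : ∀ i, A' i ≠ B' i ↔ l + i ∈ S := fun i => by
    simp only [A', B', flipAt]
    split_ifs <;> simp_all
  have hflipBit : ∀ i, flipBit A' i = fun j : Fin n => flipAt A {l + (i : ℕ)} (l + j) := fun i => by
    funext j
    by_cases hj : j = i
    · subst hj; simp [A', flipBit, flipAt]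
    · simp [A', flipBit, flipAt, Function.update_of_ne hj, Fin.val_ne_of_ne hj]
  obtain ⟨t, ht⟩ := hS
  refine not_isIsometric_of_forall_hasFactor_flipBit (A := A') (B := B') (fun h => ?_)
    (fun h => hno ((hasFactor_segment_iff f _ l).1 h)) (fun h => ?_) (fun i hi => ?_) hiso
  · obtain ⟨k, hlk, hk, hocc⟩ := (hasFactor_segment_iff f A l).1 h
    exact hA k hlk hk hocc
  · have hlt := hS_window t ht
    exact (hdiff ⟨t - l, by omega⟩).2 (by simpa [show l + (t - l) = t by omega] using ht)
      (congrFun h _)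
  · rw [hflipBit, hasFactor_segment_iff]
    exact hflip _ ((hdiff i).1 hi)

lemma exists_strictMono_comp_enum {α β : Type*} [DecidableEq α] [LinearOrder β] {D : Finset α}
    {n : ℕ} (hD : D.card = n) {g : α → β} (hg : Set.InjOn g D) :
    ∃ t : Fin n → α, StrictMono (g ∘ t) ∧ D = univ.image t := by
  have hcard : (D.image g).card = n := by rw [card_image_of_injOn hg, hD]
  choose t htD htg using fun i => mem_image.1 ((D.image g).orderEmbOfFin_mem hcard i)
  have hmono : StrictMono (g ∘ t) := fun i j hij => by
    simpa only [Function.comp, htg] using ((D.image g).orderEmbOfFin hcard).strictMono hij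
  refine ⟨t, hmono, (eq_of_subset_of_card_le (fun x hx => ?_) ?_).symm⟩
  · obtain ⟨i, -, rfl⟩ := mem_image.1 hx
    exact htD i
  · rw [card_image_of_injective _ hmono.injective.of_comp, hD, card_univ, Fintype.card_fin]

/-- The configuration of the `3`-critical case: `A` reads `F` on the windows at `0 < p < q`
except at the single defects `t₁, t₂, t₃`, and on the windows at `u` and `v` except at `{t₁, t₂}`
and `{t₂, t₃}`; `not_occ` says that `A` with all three defects flipped (the word `β`) avoids `F`. -/
structure TripleWindows (F A : ℕ → Bool) (m p q t₁ t₂ t₃ u v : ℕ) : Prop where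
  p_pos : 0 < p
  p_lt_q : p < q
  t₁_lt : t₁ < m
  p_le_t₂ : p ≤ t₂
  t₂_lt : t₂ < p + m
  q_le_t₃ : q ≤ t₃
  t₃_lt : t₃ < q + m
  t₁_ne_t₂ : t₁ ≠ t₂
  t₁_ne_t₃ : t₁ ≠ t₃
  t₂_ne_t₃ : t₂ ≠ t₃
  u_le_p : u ≤ p
  p_le_v : p ≤ v
  v_le_q : v ≤ q
  occ₁ : Occurs F m (flipAt A {t₁}) 0
  occ₂ : Occurs F m (flipAt A {t₂}) p
  occ₃ : Occurs F m (flipAt A {t₃}) q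
  occU : Occurs F m (flipAt A {t₁, t₂}) u
  occV : Occurs F m (flipAt A {t₂, t₃}) v
  not_occ : ∀ k ≤ q, ¬ Occurs F m (flipAt A {t₁, t₂, t₃}) k

namespace TripleWindows

variable {F A : ℕ → Bool} {m p q t₁ t₂ t₃ u v : ℕ}

lemma defects_mem_windows (h : TripleWindows F A m p q t₁ t₂ t₃ u v) :
    u ≤ t₃ ∧ t₃ < u + m ∧ v ≤ t₁ ∧ t₁ < v + m := by
  obtain ⟨hp, hpq, ht₁, ht₂, ht₂', ht₃, ht₃', h₁₂, h₁₃, h₂₃, hu, hv, hv', -, -, -, U, V, hβ⟩ := h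
  have hU : u ≤ t₃ ∧ t₃ < u + m := by
    by_contra hout
    exact hβ u (by omega) (U.flipAt_congr fun w _ _ => by
      simp only [mem_insert, mem_singleton]; omega)
  have hV : v ≤ t₁ ∧ t₁ < v + m := by
    by_contra hout
    exact hβ v hv' (V.flipAt_congr fun w _ _ => by
      simp only [mem_insert, mem_singleton]; omega)
  exact ⟨hU.1, hU.2, hV.1, hV.2⟩

lemma u_lt_p_lt_v (h : TripleWindows F A m p q t₁ t₂ t₃ u v) : u < p ∧ p < v := by
  obtain ⟨hu₃, hu₃', hv₁, hv₁'⟩ := h.defects_mem_windows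
  obtain ⟨hp, hpq, ht₁, ht₂, ht₂', ht₃, ht₃', h₁₂, h₁₃, h₂₃, hu, hv, hv', -, W₂, -, U, V, -⟩ := h
  constructor
  · by_contra hup
    have := (W₂.eq_iff U (t₁ - p) (t₁ - p)).1 rfl
    simp only [mem_insert, mem_singleton] at this
    omega
  · by_contra hpv
    have := (W₂.eq_iff V (t₃ - p) (t₃ - p)).1 rfl
    simp only [mem_insert, mem_singleton] at this
    omega

lemma u_pos (h : TripleWindows F A m p q t₁ t₂ t₃ u v) (ht₂m : t₂ < m) : 0 < u := by
  by_contra hu0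
  have := (h.occ₁.eq_iff h.occU t₂ t₂ ht₂m ht₂m (by omega)).1 rfl
  simp only [mem_insert, mem_singleton] at this
  exact h.t₁_ne_t₂ (by omega)

lemma v_lt_q (h : TripleWindows F A m p q t₁ t₂ t₃ u v) (hqt₂ : q ≤ t₂) : v < q := by
  obtain ⟨-, hpq, -, -, ht₂', -, -, -, -, h₂₃, -, -, hv', -, -, W₃, -, V, -⟩ := h
  by_contra hvq
  have := (W₃.eq_iff V (t₂ - q) (t₂ - q)).1 rfl
  simp only [mem_insert, mem_singleton] at this
  omega

lemma q_le_t₁ (h : TripleWindows F A m p q t₁ t₂ t₃ u v) (ht₂q : t₂ < q) : q ≤ t₁ := by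
  by_contra hlt
  exact h.not_occ q le_rfl (h.occ₃.flipAt_congr fun w _ _ => by
    simp only [mem_insert, mem_singleton]; omega)

lemma t₃_lt_m (h : TripleWindows F A m p q t₁ t₂ t₃ u v) (hmt₂ : m ≤ t₂) : t₃ < m := by
  by_contra hle
  have := h.t₁_lt
  exact h.not_occ 0 (by omega) (h.occ₁.flipAt_congr fun w _ _ => by
    simp only [mem_insert, mem_singleton]; omega)

lemma exists_of_t₂_lt_q (h : TripleWindows F A m p q t₁ t₂ t₃ u v) (ht₂q : t₂ < q) :
    ∃ r, 0 < r ∧ q = 3 * r ∧ q < m := by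
  obtain ⟨hu₃, hu₃', hv₁, hv₁'⟩ := h.defects_mem_windows
  obtain ⟨hup, hpv⟩ := h.u_lt_p_lt_v
  have hqt₁ := h.q_le_t₁ ht₂q
  have hu0 := h.u_pos (by have := h.t₁_lt; omega)
  obtain ⟨hp, hpq, ht₁, ht₂, ht₂', ht₃, ht₃', h₁₂, h₁₃, h₂₃, hu, hv, hv', W₁, W₂, W₃, U, -, -⟩ := h
  obtain ⟨g, hg⟩ : ∃ g, p = u + g := ⟨p - u, by omega⟩
  obtain ⟨s, hs⟩ : ∃ s, q = p + s := ⟨q - p, by omega⟩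
  obtain ⟨b, hb⟩ : ∃ b, t₁ = q + b := ⟨t₁ - q, by omega⟩
  -- Each step below reads `F` from `t₁` down to `b` through three windows whose offsets add up to
  -- `q`; as the two ends differ (`e₀`), the middle comparison must meet a defect, which locates it.
  have e₀ : F t₁ ≠ F b := fun he => by
    have := (W₁.eq_iff W₃ t₁ b).1 he
    simp only [mem_singleton] at this
    omega
  have e₁ : F t₁ = F (g + s + b) :=
    (W₁.eq_iff U _ _).2 (by simp only [mem_insert, mem_singleton]; omega)
  have e₂ : F (g + b) = F b := (U.eq_iff W₂ _ _).2 (by simp only [mem_insert, mem_singleton]; omega)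
  have ht₃g : t₃ = t₁ + g := by
    have := (W₂.eq_iff W₃ (g + s + b) (g + b)).not.1 fun he => e₀ (e₁.trans (he.trans e₂))
    simp only [mem_singleton] at this
    omega
  have e₃ : F t₁ = F (u + s + b) :=
    (U.eq_iff W₂ _ _).2 (by simp only [mem_insert, mem_singleton]; omega)
  have e₄ : F (s + b) = F b := (W₂.eq_iff W₃ _ _).2 (by simp only [mem_singleton]; omega)
  have ht₂s : t₂ = u + s + b := by
    have := (W₁.eq_iff U (u + s + b) (s + b)).not.1 fun he => e₀ (e₃.trans (he.trans e₄))
    simp only [mem_insert, mem_singleton] at this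
    omega
  have e₅ : F (u + b) = F b := (W₁.eq_iff U _ _).2 (by simp only [mem_insert, mem_singleton]; omega)
  have hug : u = g := by
    have := (W₂.eq_iff W₃ (u + s + b) (u + b)).not.1 fun he => e₀ (e₃.trans (he.trans e₅))
    simp only [mem_singleton] at this
    omega
  have e₆ : F t₁ = F (u + g + b) := (W₂.eq_iff W₃ _ _).2 (by simp only [mem_singleton]; omega)
  have hus : u = s := by
    have := (U.eq_iff W₂ (u + g + b) (u + b)).not.1 fun he => e₀ (e₆.trans (he.trans e₅))
    simp only [mem_insert, mem_singleton] at this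
    omega
  exact ⟨u, hu0, by omega, by omega⟩

lemma t₂_lt_q_or_m_le_t₂ (h : TripleWindows F A m p q t₁ t₂ t₃ u v) : t₂ < q ∨ m ≤ t₂ := by
  by_contra! hmid
  obtain ⟨hu₃, hu₃', hv₁, hv₁'⟩ := h.defects_mem_windows
  obtain ⟨hup, hpv⟩ := h.u_lt_p_lt_v
  have hu0 := h.u_pos hmid.2
  have hvq := h.v_lt_q hmid.1
  obtain ⟨hp, hpq, ht₁, ht₂, ht₂', ht₃, ht₃', h₁₂, h₁₃, h₂₃, hu, hv, hv', W₁, W₂, W₃, U, V, -⟩ := h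
  obtain ⟨g, hg⟩ : ∃ g, p = u + g := ⟨p - u, by omega⟩
  obtain ⟨e, he⟩ : ∃ e, v = p + e := ⟨v - p, by omega⟩
  obtain ⟨c, hc⟩ : ∃ c, q = v + c := ⟨q - v, by omega⟩
  obtain ⟨b, hb⟩ : ∃ b, t₂ = q + b := ⟨t₂ - q, by omega⟩
  have e₀ : F t₂ = F b := (W₁.eq_iff W₃ _ _).2 (by simp only [mem_singleton]; omega)
  have e₁ : F (c + b) ≠ F b := fun he' => by
    have := (V.eq_iff W₃ (c + b) b).1 he'
    simp only [mem_insert, mem_singleton] at this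
    omega
  have e₂ : F (u + e + c + b) = F (e + c + b) :=
    (W₁.eq_iff U _ _).2 (by simp only [mem_insert, mem_singleton]; omega)
  have e₃ : F (e + c + b) = F (c + b) :=
    (W₂.eq_iff V _ _).2 (by simp only [mem_insert, mem_singleton]; omega)
  have ht₁u : t₁ = t₂ + u := by
    have := (U.eq_iff W₂ t₂ (u + e + c + b)).not.1 fun he' =>
      e₁ (e₃.symm.trans (e₂.symm.trans (he'.symm.trans e₀)))
    simp only [mem_insert, mem_singleton] at this
    omega
  have e₄ : F (u + g + c + b) = F (u + g + b) :=
    (V.eq_iff W₃ _ _).2 (by simp only [mem_insert, mem_singleton]; omega)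
  have e₅ : F (u + g + b) = F (g + b) :=
    (W₁.eq_iff U _ _).2 (by simp only [mem_insert, mem_singleton]; omega)
  have e₆ : F (g + b) = F b := (U.eq_iff W₂ _ _).2 (by simp only [mem_insert, mem_singleton]; omega)
  have e₇ : F (u + g + c + b) = F (g + c + b) :=
    (W₁.eq_iff U _ _).2 (by simp only [mem_insert, mem_singleton]; omega)
  have e₈ : F (g + c + b) = F (c + b) :=
    (U.eq_iff W₂ _ _).2 (by simp only [mem_insert, mem_singleton]; omega)
  exact e₁ (e₈.symm.trans (e₇.symm.trans (e₄.trans (e₅.trans e₆))))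

lemma exists_of_m_le_t₂ (h : TripleWindows F A m p q t₁ t₂ t₃ u v) (hmt₂ : m ≤ t₂) :
    ∃ r, 0 < r ∧ q = 3 * r ∧ q < m := by
  obtain ⟨hu₃, hu₃', hv₁, hv₁'⟩ := h.defects_mem_windows
  obtain ⟨hup, hpv⟩ := h.u_lt_p_lt_v
  have ht₃m := h.t₃_lt_m hmt₂
  have hvq := h.v_lt_q (by have := h.q_le_t₃; omega)
  obtain ⟨hp, hpq, ht₁, ht₂, ht₂', ht₃, ht₃', h₁₂, h₁₃, h₂₃, hu, hv, hv', W₁, W₂, W₃, -, V, -⟩ := h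
  obtain ⟨e, he⟩ : ∃ e, v = p + e := ⟨v - p, by omega⟩
  obtain ⟨c, hc⟩ : ∃ c, q = v + c := ⟨q - v, by omega⟩
  obtain ⟨b, hb⟩ : ∃ b, t₃ = q + b := ⟨t₃ - q, by omega⟩
  have e₀ : F t₃ ≠ F b := fun he' => by
    have := (W₁.eq_iff W₃ t₃ b).1 he'
    simp only [mem_singleton] at this
    omega
  have e₁ : F t₃ = F (e + c + b) := (W₁.eq_iff W₂ _ _).2 (by simp only [mem_singleton]; omega)
  have e₂ : F (e + b) = F b := (W₂.eq_iff V _ _).2 (by simp only [mem_insert, mem_singleton]; omega)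
  have ht₂e : t₂ = t₃ + e := by
    have := (V.eq_iff W₃ (e + c + b) (e + b)).not.1 fun he' => e₀ (e₁.trans (he'.trans e₂))
    simp only [mem_insert, mem_singleton] at this
    omega
  have e₃ : F t₃ = F (p + c + b) :=
    (W₂.eq_iff V _ _).2 (by simp only [mem_insert, mem_singleton]; omega)
  have e₄ : F (c + b) = F b := (V.eq_iff W₃ _ _).2 (by simp only [mem_insert, mem_singleton]; omega)
  have ht₁c : t₁ = p + c + b := by
    have := (W₁.eq_iff W₂ (p + c + b) (c + b)).not.1 fun he' => e₀ (e₃.trans (he'.trans e₄))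
    simp only [mem_singleton] at this
    omega
  have e₅ : F t₃ = F (p + e + b) :=
    (V.eq_iff W₃ _ _).2 (by simp only [mem_insert, mem_singleton]; omega)
  have ht₁e : t₁ = p + e + b := by
    have := (W₁.eq_iff W₂ (p + e + b) (e + b)).not.1 fun he' => e₀ (e₅.trans (he'.trans e₂))
    simp only [mem_singleton] at this
    omega
  have e₆ : F (p + b) = F b := (W₁.eq_iff W₂ _ _).2 (by simp only [mem_singleton]; omega)
  have hpc : p = c := by
    have := (W₂.eq_iff V (p + e + b) (p + b)).not.1 fun he' => e₀ (e₅.trans (he'.trans e₆))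
    simp only [mem_insert, mem_singleton] at this
    omega
  exact ⟨p, hp, by omega, by omega⟩

lemma exists_eq_three_mul (h : TripleWindows F A m p q t₁ t₂ t₃ u v) :
    ∃ r, 0 < r ∧ q = 3 * r ∧ q < m :=
  h.t₂_lt_q_or_m_le_t₂.elim h.exists_of_t₂_lt_q h.exists_of_m_le_t₂

end TripleWindows

/-- `A` is the word `α` and `D` the set of positions where `β = flipAt A D` differs from it. -/
structure CriticalSet (F : ℕ → Bool) (m d : ℕ) (A : ℕ → Bool) (D : Finset ℕ) : Prop where
  avoids : ∀ k, k + m ≤ d → ¬ Occurs F m A k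
  avoids_flipAt : ∀ k, k + m ≤ d → ¬ Occurs F m (flipAt A D) k
  exists_window : ∀ t ∈ D, ∃ k, k + m ≤ d ∧ Occurs F m (flipAt A {t}) k

lemma criticalSet_of_forall_hasFactor_flipBit {d m : ℕ} {f : Fin m → Bool} {α β : Fin d → Bool}
    (hα : ¬ hasFactor α f) (hβ : ¬ hasFactor β f)
    (hflip : ∀ i, α i ≠ β i → hasFactor (flipBit α i) f) :
    CriticalSet (natWord f) m d (natWord α) (diffPos α β) where
  avoids k hk hocc := hα ((hasFactor_iff_exists_occurs α f).2 ⟨k, hk, hocc⟩)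
  avoids_flipAt k hk hocc :=
    hβ ((hasFactor_iff_exists_occurs β f).2 ⟨k, hk, natWord_eq_flipAt_diffPos α β ▸ hocc⟩)
  exists_window t ht := by
    obtain ⟨i, hi, rfl⟩ : ∃ i : Fin d, α i ≠ β i ∧ (i : ℕ) = t := by simpa [diffPos] using ht
    simpa [hasFactor_iff_exists_occurs, natWord_flipBit] using hflip i hi

lemma pCritical.exists_criticalSet {d m p : ℕ} {f : Fin m → Bool} {α β : Fin d → Bool}
    (h : pCritical d f p α β) : ∃ A D, CriticalSet (natWord f) m d A D ∧ D.card = p := by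
  obtain ⟨hα, hβ, hp, -, hflip | hflip⟩ := h
  · exact ⟨_, _, criticalSet_of_forall_hasFactor_flipBit hα hβ hflip, (card_diffPos α β).trans hp⟩
  · refine ⟨_, _, criticalSet_of_forall_hasFactor_flipBit hβ hα fun i hi => hflip i hi.symm, ?_⟩
    rw [card_diffPos, hammingDist_comm, hp]

namespace CriticalSet

variable {F A : ℕ → Bool} {m d : ℕ} {D : Finset ℕ} {g : ℕ → ℕ}

lemma mem_window (h : CriticalSet F m d A D) {t k : ℕ} (hk : k + m ≤ d)
    (hocc : Occurs F m (flipAt A {t}) k) : k ≤ t ∧ t < k + m :=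
  hocc.mem_window (h.avoids k hk)

lemma injOn (h : CriticalSet F m d A D)
    (hg : ∀ t ∈ D, g t + m ≤ d ∧ Occurs F m (flipAt A {t}) (g t)) : Set.InjOn g D :=
  fun s hs t ht hst => by
    have := h.mem_window (hg s hs).1 (hg s hs).2
    exact (hg s hs).2.eq_of_flipAt_singleton (hst ▸ (hg t ht).2) this.1 this.2

variable {f : Fin m → Bool}

lemma exists_occurs_flipAt (h : CriticalSet (natWord f) m d A D)
    (hiso : ∀ n < d, IsIsometric n f) {S : Finset ℕ} (hS : S.Nonempty) {l n : ℕ} (hn : n < d)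
    (hln : l + n ≤ d)
    (hwin : ∀ t ∈ S, ∃ k, l ≤ k ∧ k + m ≤ l + n ∧ Occurs (natWord f) m (flipAt A {t}) k) :
    ∃ k, l ≤ k ∧ k + m ≤ l + n ∧ Occurs (natWord f) m (flipAt A S) k :=
  exists_occurs_flipAt_of_isIsometric (hiso n hn) hS (fun k _ hk => h.avoids k (by omega)) hwin

lemma window_eq_zero (h : CriticalSet (natWord f) m d A D) (hiso : ∀ n < d, IsIsometric n f)
    (hg : ∀ t ∈ D, g t + m ≤ d ∧ Occurs (natWord f) m (flipAt A {t}) (g t)) {a : ℕ} (ha : a ∈ D)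
    (hfirst : ∀ t ∈ D, g a ≤ g t) : g a = 0 := by
  by_contra h0
  have := (hg a ha).1
  obtain ⟨k, -, hk, hocc⟩ := h.exists_occurs_flipAt hiso ⟨a, ha⟩ (l := 1) (n := d - 1)
    (by omega) (by omega) fun t ht =>
      ⟨g t, by have := hfirst t ht; omega, by have := (hg t ht).1; omega, (hg t ht).2⟩
  exact h.avoids_flipAt k (by omega) hocc

lemma window_add_eq (h : CriticalSet (natWord f) m d A D) (hiso : ∀ n < d, IsIsometric n f)
    (hg : ∀ t ∈ D, g t + m ≤ d ∧ Occurs (natWord f) m (flipAt A {t}) (g t)) {c : ℕ} (hc : c ∈ D)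
    (hlast : ∀ t ∈ D, g t ≤ g c) : g c + m = d := by
  by_contra hd
  have := (hg c hc).1
  obtain ⟨k, -, hk, hocc⟩ := h.exists_occurs_flipAt hiso ⟨c, hc⟩ (l := 0) (n := d - 1)
    (by omega) (by omega) fun t ht => ⟨g t, by omega, by have := hlast t ht; omega, (hg t ht).2⟩
  exact h.avoids_flipAt k (by omega) hocc

lemma windows_span (h : CriticalSet (natWord f) m d A D) (hiso : ∀ n < d, IsIsometric n f)
    (hg : ∀ t ∈ D, g t + m ≤ d ∧ Occurs (natWord f) m (flipAt A {t}) (g t)) {n : ℕ}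
    {t : Fin (n + 1) → ℕ} (hmono : StrictMono (g ∘ t)) (hDt : D = univ.image t) :
    g (t 0) = 0 ∧ g (t (Fin.last n)) + m = d := by
  have hmem : ∀ i, t i ∈ D := fun i => hDt ▸ mem_image_of_mem t (mem_univ i)
  have hle : ∀ s ∈ D, g (t 0) ≤ g s ∧ g s ≤ g (t (Fin.last n)) := fun s hs => by
    obtain ⟨i, -, rfl⟩ := mem_image.1 (hDt ▸ hs)
    exact ⟨hmono.monotone (Fin.zero_le i), hmono.monotone (Fin.le_last i)⟩
  exact ⟨h.window_eq_zero hiso hg (hmem 0) fun s hs => (hle s hs).1,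
    h.window_add_eq hiso hg (hmem _) fun s hs => (hle s hs).2⟩

theorem index_eq_of_card_eq_two (h : CriticalSet (natWord f) m d A D)
    (hiso : ∀ n < d, IsIsometric n f) (hD : D.card = 2) :
    ∃ r, 1 ≤ r ∧ r ≤ m - 2 ∧ d = m + r := by
  choose! g hg using h.exists_window
  obtain ⟨t, hmono, hDt⟩ := exists_strictMono_comp_enum hD (h.injOn hg)
  obtain ⟨h₀, h₁ : g (t 1) + m = d⟩ := h.windows_span hiso hg hmono hDt
  have hD₂ : D = {t 0, t 1} := by rw [hDt]; simp [Fin.univ_succ]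
  obtain ⟨hk₀, W₀⟩ := hg (t 0) (by simp [hD₂])
  obtain ⟨hk₁, W₁⟩ := hg (t 1) (by simp [hD₂])
  have h₀₁ : g (t 0) < g (t 1) := hmono (by decide)
  have hne : t 0 ≠ t 1 := hmono.injective.of_comp.ne (by decide)
  have hw₀ := h.mem_window hk₀ W₀
  have hw₁ := h.mem_window hk₁ W₁
  have ht₁ : t 1 < g (t 0) + m := by
    by_contra hout
    exact h.avoids_flipAt _ hk₀ (W₀.flipAt_congr fun w _ _ => by
      rw [hD₂]; simp only [mem_insert, mem_singleton]; omega)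
  have ht₀ : g (t 1) ≤ t 0 := by
    by_contra hout
    exact h.avoids_flipAt _ hk₁ (W₁.flipAt_congr fun w _ _ => by
      rw [hD₂]; simp only [mem_insert, mem_singleton]; omega)
  exact ⟨g (t 1), by omega, by omega, by omega⟩

lemma exists_tripleWindows (h : CriticalSet (natWord f) m d A D)
    (hiso : ∀ n < d, IsIsometric n f) {t₁ t₂ t₃ p q : ℕ} (hD : D = {t₁, t₂, t₃})
    (h₁₂ : t₁ ≠ t₂) (h₁₃ : t₁ ≠ t₃) (h₂₃ : t₂ ≠ t₃) (hp : 0 < p) (hpq : p < q) (hqd : q + m = d)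
    (W₁ : Occurs (natWord f) m (flipAt A {t₁}) 0) (W₂ : Occurs (natWord f) m (flipAt A {t₂}) p)
    (W₃ : Occurs (natWord f) m (flipAt A {t₃}) q) :
    ∃ u v, TripleWindows (natWord f) A m p q t₁ t₂ t₃ u v := by
  have hw₁ := h.mem_window (by omega) W₁
  have hw₂ := h.mem_window (by omega) W₂
  have hw₃ := h.mem_window hqd.le W₃
  obtain ⟨u, -, hu, U⟩ := h.exists_occurs_flipAt hiso (S := {t₁, t₂}) (l := 0) (n := p + m)
    (by simp) (by omega) (by omega) fun s hs => by
      simp only [mem_insert, mem_singleton] at hs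
      rcases hs with rfl | rfl
      exacts [⟨0, le_rfl, by omega, W₁⟩, ⟨p, by omega, by omega, W₂⟩]
  obtain ⟨v, hv, hv', V⟩ := h.exists_occurs_flipAt hiso (S := {t₂, t₃}) (l := p) (n := d - p)
    (by simp) (by omega) (by omega) fun s hs => by
      simp only [mem_insert, mem_singleton] at hs
      rcases hs with rfl | rfl
      exacts [⟨p, le_rfl, by omega, W₂⟩, ⟨q, by omega, by omega, W₃⟩]
  exact ⟨u, v, hp, hpq, by omega, hw₂.1, hw₂.2, hw₃.1, hw₃.2, h₁₂, h₁₃, h₂₃, by omega, hv, by omega,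
    W₁, W₂, W₃, U, V, fun k _ hocc => h.avoids_flipAt k (by omega) (hD ▸ hocc)⟩

theorem index_eq_of_card_eq_three (h : CriticalSet (natWord f) m d A D)
    (hiso : ∀ n < d, IsIsometric n f) (hD : D.card = 3) :
    ∃ r, 3 * r + 1 ≤ m ∧ d = m + 3 * r := by
  choose! g hg using h.exists_window
  obtain ⟨t, hmono, hDt⟩ := exists_strictMono_comp_enum hD (h.injOn hg)
  obtain ⟨h₀, h₂ : g (t 2) + m = d⟩ := h.windows_span hiso hg hmono hDt
  have hD₃ : D = {t 0, t 1, t 2} := by rw [hDt]; simp [Fin.univ_succ]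
  have h₀₁ : g (t 0) < g (t 1) := hmono (by decide)
  have h₁₂ : g (t 1) < g (t 2) := hmono (by decide)
  have hinj := hmono.injective.of_comp
  obtain ⟨u, v, hT⟩ := h.exists_tripleWindows hiso hD₃ (hinj.ne (by decide)) (hinj.ne (by decide))
    (hinj.ne (by decide)) (by omega) h₁₂ h₂ (h₀ ▸ (hg _ (by simp [hD₃])).2)
    (hg _ (by simp [hD₃])).2 (hg _ (by simp [hD₃])).2
  obtain ⟨r, -, hq, hqm⟩ := hT.exists_eq_three_mul
  exact ⟨r, by omega, by omega⟩

end CriticalSet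

theorem stmt_17_general (m : ℕ) (f : Fin m → Bool)
    (α β : Fin (Bindex f) → Bool) :
    (pCritical (Bindex f) f 2 α β →
      ∃ r, 1 ≤ r ∧ r ≤ m - 2 ∧ Bindex f = m + r) ∧
    (pCritical (Bindex f) f 3 α β →
      ∃ r', 3 * r' + 1 ≤ m ∧ Bindex f = m + 3 * r') := by
  have hiso : ∀ n < Bindex f, IsIsometric n f := fun n hn => not_not.1 (Nat.notMem_of_lt_sInf hn)
  refine ⟨fun h => ?_, fun h => ?_⟩
  · obtain ⟨A, D, hcrit, hD⟩ := h.exists_criticalSet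
    exact hcrit.index_eq_of_card_eq_two hiso hD
  · obtain ⟨A, D, hcrit, hD⟩ := h.exists_criticalSet
    exact hcrit.index_eq_of_card_eq_three hiso hD

/-- Note 3.5: if `α, β` are `2`-critical words for `Q_{B(f)}(f)` then
`B(f) = |f| + r` with `1 ≤ r ≤ |f| - 2`; if they are `3`-critical words then
`B(f) = |f| + 3r'` with `3r' + 1 ≤ |f|`. -/
theorem stmt_17 (m : ℕ) (f : Fin m → Bool) (hBad : Bad f)
    (α β : Fin (Bindex f) → Bool) :
    (pCritical (Bindex f) f 2 α β →
      ∃ r, 1 ≤ r ∧ r ≤ m - 2 ∧ Bindex f = m + r) ∧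
    (pCritical (Bindex f) f 3 α β →
      ∃ r', 3 * r' + 1 ≤ m ∧ Bindex f = m + 3 * r') :=
  stmt_17_general m f α β
end
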